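/- Let f_n(x) = ∏_{ℓ=0}^{n−1}(1 − cos(2^{ℓ+1}πx)). For N ≥ n, one has F_N(2^{−n}) := ∫₀^{2^{−n}} f_N(x) dx ≥ 2^{−n} f_n(2^{−n−1}). -/

import Mathlib

noncomputable def tmRiesz (n : ℕ) (x : ℝ) : ℝ :=
  ∏ ℓ ∈ Finset.range n, (1 - Real.cos (2 ^ (ℓ + 1) * Real.pi * x))

/-!
Write `σ = 2⁻ⁿ` and `N = n + k`. Since `f_N(x) = f_n(x) f_k(2ⁿx)` and `f_k(1 - y) = f_k(y)`,
symmetrising under `x ↦ σ - x` gives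
`2 F_N(σ) = ∫₀^σ (f_n(x) + f_n(σ - x)) f_k(2ⁿx) dx`.
Instead of the convexity of `f_n` on `[0, σ]` and Jensen's inequality, it suffices that
`f_n(x) + f_n(σ - x) ≥ 2 f_n(σ/2)` there. This follows by induction from
`f_{n+1}(x) = g(2x) f_n(2x)` with `g(y) = 1 - cos πy`: on `[0, σ]` both `g` and `f_n` are
nonnegative, increasing and have the property, and Chebyshev's inequality passes it to `g f_n`.
The remaining integral is `σ ∫₀¹ f_k = σ`.
-/

open Real Set intervalIntegral

theorem IsMinOn.add_comp_sub_mul {f g : ℝ → ℝ} {σ : ℝ}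
    (hf : IsMinOn (fun t => f t + f (σ - t)) (Icc 0 σ) (σ / 2))
    (hg : IsMinOn (fun t => g t + g (σ - t)) (Icc 0 σ) (σ / 2))
    (hf_mono : MonotoneOn f (Icc 0 σ)) (hg_mono : MonotoneOn g (Icc 0 σ))
    (hf₀ : 0 ≤ f (σ / 2)) (hg₀ : 0 ≤ g (σ / 2)) :
    IsMinOn (fun t => f t * g t + f (σ - t) * g (σ - t)) (Icc 0 σ) (σ / 2) := by
  refine isMinOn_iff.2 fun t ht => ?_
  have hs : σ - t ∈ Icc 0 σ := ⟨by linarith [ht.2], by linarith [ht.1]⟩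
  have hft := isMinOn_iff.1 hf t ht
  have hgt := isMinOn_iff.1 hg t ht
  simp only [show σ - σ / 2 = σ / 2 by ring] at hft hgt ⊢
  -- Chebyshev's inequality for the similarly ordered pairs `(f t, f (σ - t))`, `(g t, g (σ - t))`
  have hcheb : 0 ≤ (f t - f (σ - t)) * (g t - g (σ - t)) := by
    rcases le_total t (σ - t) with h | h
    · exact mul_nonneg_of_nonpos_of_nonpos (sub_nonpos.2 (hf_mono ht hs h))
        (sub_nonpos.2 (hg_mono ht hs h))
    · exact mul_nonneg (sub_nonneg.2 (hf_mono hs ht h)) (sub_nonneg.2 (hg_mono hs ht h))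
  nlinarith [mul_le_mul hft hgt (by linarith) (by linarith)]

lemma monotoneOn_one_sub_cos_pi_mul : MonotoneOn (fun y => 1 - cos (π * y)) (Icc 0 1) :=
  fun a ha b hb hab => by
    have hmem : ∀ y ∈ Icc (0 : ℝ) 1, π * y ∈ Icc 0 π := fun y hy =>
      ⟨by nlinarith [pi_pos, hy.1], by nlinarith [pi_pos, hy.2]⟩
    have := antitoneOn_cos (hmem a ha) (hmem b hb) (by nlinarith [pi_pos])
    exact sub_le_sub_left this 1

lemma isMinOn_one_sub_cos_pi_mul {σ : ℝ} (hσ : σ ≤ 1) :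
    IsMinOn (fun t => (1 - cos (π * t)) + (1 - cos (π * (σ - t)))) (Icc 0 σ) (σ / 2) := by
  refine isMinOn_iff.2 fun t ht => ?_
  have hcos_mid : 0 ≤ cos (π * (σ / 2)) :=
    cos_nonneg_of_mem_Icc ⟨by nlinarith [pi_pos, ht.1, ht.2], by nlinarith [pi_pos]⟩
  have hsum : cos (π * t) + cos (π * (σ - t)) = 2 * cos (π * (σ / 2)) * cos (π * (t - σ / 2)) := by
    rw [cos_add_cos]; ring_nf
  simp only [show σ - σ / 2 = σ / 2 by ring]
  nlinarith [cos_le_one (π * (t - σ / 2))]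

lemma tmRiesz_nonneg (n : ℕ) (x : ℝ) : 0 ≤ tmRiesz n x :=
  Finset.prod_nonneg fun _ _ => sub_nonneg.2 (cos_le_one _)

@[fun_prop]
lemma continuous_tmRiesz (n : ℕ) : Continuous (tmRiesz n) :=
  continuous_finsetProd _ fun _ _ => by fun_prop

lemma tmRiesz_add (n k : ℕ) (x : ℝ) :
    tmRiesz (n + k) x = tmRiesz n x * tmRiesz k (2 ^ n * x) := by
  rw [tmRiesz, Finset.prod_range_add]
  congr 1
  refine Finset.prod_congr rfl fun ℓ _ => ?_
  rw [pow_add, pow_add]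
  ring_nf

lemma tmRiesz_succ (n : ℕ) (x : ℝ) :
    tmRiesz (n + 1) x = (1 - cos (π * (2 * x))) * tmRiesz n (2 * x) := by
  rw [add_comm, tmRiesz_add, pow_one]
  congr 1
  simp [tmRiesz, mul_comm, mul_left_comm]

lemma tmRiesz_periodic (n : ℕ) : Function.Periodic (tmRiesz n) 1 := fun x =>
  Finset.prod_congr rfl fun ℓ _ => by
    have : (2 : ℝ) ^ (ℓ + 1) * π * (x + 1) = 2 ^ (ℓ + 1) * π * x + (2 ^ ℓ : ℤ) * (2 * π) := by
      push_cast; ring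
    rw [this, cos_add_int_mul_two_pi]

lemma tmRiesz_one_sub (n : ℕ) (x : ℝ) : tmRiesz n (1 - x) = tmRiesz n x :=
  Finset.prod_congr rfl fun ℓ _ => by
    have : (2 : ℝ) ^ (ℓ + 1) * π * (1 - x) = (2 ^ ℓ : ℤ) * (2 * π) - 2 ^ (ℓ + 1) * π * x := by
      push_cast; ring
    rw [this, cos_int_mul_two_pi_sub]

lemma monotoneOn_tmRiesz (n : ℕ) : MonotoneOn (tmRiesz n) (Icc 0 (2 ^ n)⁻¹) := by
  intro a ha b hb hab
  refine Finset.prod_le_prod (fun ℓ _ => sub_nonneg.2 (cos_le_one _)) fun ℓ hℓ => ?_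
  have hmaps : ∀ x ∈ Icc (0 : ℝ) (2 ^ n)⁻¹, 2 ^ (ℓ + 1) * x ∈ Icc (0 : ℝ) 1 := by
    intro x hx
    refine ⟨by positivity [hx.1], ?_⟩
    calc (2 : ℝ) ^ (ℓ + 1) * x ≤ 2 ^ n * (2 ^ n)⁻¹ := by
          gcongr
          exacts [hx.1, one_le_two, Finset.mem_range.1 hℓ, hx.2]
      _ = 1 := mul_inv_cancel₀ (by positivity)
  have := monotoneOn_one_sub_cos_pi_mul (hmaps a ha) (hmaps b hb) (by gcongr)
  convert this using 2 <;> ring_nf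

lemma isMinOn_tmRiesz_add_comp_sub (n : ℕ) :
    IsMinOn (fun t => tmRiesz n t + tmRiesz n ((2 ^ n)⁻¹ - t)) (Icc 0 (2 ^ n)⁻¹)
      ((2 ^ n)⁻¹ / 2) := by
  induction n with
  | zero => simp [tmRiesz, isMinOn_const]
  | succ n ih =>
    set σ : ℝ := (2 ^ n)⁻¹
    have hσ₁ : σ ≤ 1 := inv_le_one_of_one_le₀ (one_le_pow₀ one_le_two)
    have hσ_succ : ((2 : ℝ) ^ (n + 1))⁻¹ = σ / 2 := by rw [pow_succ, mul_inv, div_eq_mul_inv]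
    have hprod := (isMinOn_one_sub_cos_pi_mul hσ₁).add_comp_sub_mul ih
      (monotoneOn_one_sub_cos_pi_mul.mono (Icc_subset_Icc_right hσ₁)) (monotoneOn_tmRiesz n)
      (sub_nonneg.2 (cos_le_one _)) (tmRiesz_nonneg n _)
    have hdouble : MapsTo (fun t : ℝ => 2 * t) (Icc 0 (σ / 2)) (Icc 0 σ) := fun t ht =>
      ⟨by linarith [ht.1], by linarith [ht.2]⟩
    rw [hσ_succ]
    convert hprod.comp_mapsTo hdouble (b := σ / 2 / 2) (by ring) using 1
    funext t
    simp only [Function.comp, tmRiesz_succ, show 2 * (σ / 2 - t) = σ - 2 * t by ring]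

lemma tmRiesz_succ_add_tmRiesz_succ_add_half (k : ℕ) (x : ℝ) :
    tmRiesz (k + 1) x + tmRiesz (k + 1) (x + 1 / 2) = 2 * tmRiesz k (2 * x) := by
  rw [tmRiesz_succ, tmRiesz_succ, show 2 * (x + 1 / 2) = 2 * x + 1 by ring,
    tmRiesz_periodic, show π * (2 * x + 1) = π * (2 * x) + π by ring, cos_add_pi]
  ring

lemma integral_tmRiesz_zero_one (k : ℕ) : ∫ x in (0 : ℝ)..1, tmRiesz k x = 1 := by
  induction k with
  | zero => simp [tmRiesz]
  | succ k ih =>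
    have hshift : ∫ x in (0 : ℝ)..1, tmRiesz (k + 1) (x + 1 / 2)
        = ∫ x in (0 : ℝ)..1, tmRiesz (k + 1) x := by
      simpa [integral_comp_add_right, add_comm] using
        (tmRiesz_periodic (k + 1)).intervalIntegral_add_eq (1 / 2) 0
    have hdouble : ∫ x in (0 : ℝ)..1, tmRiesz k (2 * x) = 1 := by
      have := (tmRiesz_periodic k).intervalIntegral_add_zsmul_eq 2 0
        (continuous_tmRiesz k).intervalIntegrable
      simp only [zero_add, zsmul_eq_mul, Int.cast_ofNat, mul_one] at this
      rw [integral_comp_mul_left _ two_ne_zero, mul_zero, mul_one, this, ih]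
      norm_num
    have hsum := integral_add (μ := MeasureTheory.volume) ((continuous_tmRiesz (k + 1)).intervalIntegrable 0 1)
      (((continuous_tmRiesz (k + 1)).comp (continuous_add_const (1 / 2))).intervalIntegrable 0 1)
    simp only [Function.comp_def, tmRiesz_succ_add_tmRiesz_succ_add_half, integral_const_mul,
      hdouble, hshift] at hsum
    linarith

lemma integral_tmRiesz_comp_pow_mul (n k : ℕ) :
    ∫ x in (0 : ℝ)..(2 ^ n)⁻¹, tmRiesz k (2 ^ n * x) = (2 ^ n)⁻¹ := by
  rw [integral_comp_mul_left _ (by positivity), mul_zero, mul_inv_cancel₀ (by positivity),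
    integral_tmRiesz_zero_one, smul_eq_mul, mul_one]

lemma two_mul_tmRiesz_mul_le_add (n k : ℕ) {x : ℝ} (hx : x ∈ Icc 0 (2 ^ n)⁻¹) :
    2 * tmRiesz n ((2 ^ n)⁻¹ / 2) * tmRiesz k (2 ^ n * x)
      ≤ tmRiesz (n + k) x + tmRiesz (n + k) ((2 ^ n)⁻¹ - x) := by
  have hmin := isMinOn_iff.1 (isMinOn_tmRiesz_add_comp_sub n) x hx
  simp only [sub_half] at hmin
  have hreflect : tmRiesz k (2 ^ n * ((2 ^ n)⁻¹ - x)) = tmRiesz k (2 ^ n * x) := by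
    rw [mul_sub, mul_inv_cancel₀ (by positivity), tmRiesz_one_sub]
  rw [tmRiesz_add, tmRiesz_add, hreflect, ← add_mul, two_mul]
  exact mul_le_mul_of_nonneg_right hmin (tmRiesz_nonneg k _)

theorem tmRiesz_lower_bound (n N : ℕ) (hnN : n ≤ N) :
    (2:ℝ) ^ (-(n : ℤ)) * tmRiesz n ((2:ℝ) ^ (-(n : ℤ) - 1))
      ≤ ∫ x in (0:ℝ)..((2:ℝ) ^ (-(n : ℤ))), tmRiesz N x := by
  obtain ⟨k, rfl⟩ := Nat.exists_eq_add_of_le hnN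
  rw [zpow_sub₀ two_ne_zero, zpow_neg, zpow_natCast, zpow_one]
  set σ : ℝ := (2 ^ n)⁻¹
  have hint {f : ℝ → ℝ} (hf : Continuous f) : IntervalIntegrable f MeasureTheory.volume 0 σ :=
    hf.intervalIntegrable _ _
  have hsymm : ∫ x in (0 : ℝ)..σ, tmRiesz (n + k) (σ - x) = ∫ x in (0 : ℝ)..σ, tmRiesz (n + k) x := by
    simp [integral_comp_sub_left]
  have hmono := integral_mono_on (by positivity) (hint (by fun_prop)) (hint (by fun_prop))
    (fun x hx => two_mul_tmRiesz_mul_le_add n k hx)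
  rw [integral_const_mul, integral_tmRiesz_comp_pow_mul,
    integral_add (hint (by fun_prop)) (hint (by fun_prop)), hsymm] at hmono
  linarith
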